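/- For two Hermitian matrices A and E, the trace distance between the normalized matrix exponentials e^{A+E}/tr(e^{A+E}) and e^{A}/tr(e^{A}) is at most 2 times the operator norm of E. -/

import Mathlib

open scoped Matrix.Norms.L2Operator
open scoped ComplexOrder

variable {n : Type*} [Fintype n] [DecidableEq n]

/-- The square root of a positive semidefinite matrix, as `Matrix.PosSemidef.sqrt` was defined in
Mathlib (December 2024); it has since been removed. -/
noncomputable def Matrix.PosSemidef.sqrt {A : Matrix n n ℂ} (hA : A.PosSemidef) : Matrix n n ℂ :=
  hA.1.eigenvectorUnitary.1 * Matrix.diagonal ((↑) ∘ Real.sqrt ∘ hA.1.eigenvalues) *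
  (star hA.1.eigenvectorUnitary : Matrix n n ℂ)

/-- The trace norm of a matrix: the sum of its singular values, computed as `tr √(Aᴴ A)`. -/
noncomputable def traceNorm (A : Matrix n n ℂ) : ℝ :=
  ((Matrix.posSemidef_conjTranspose_mul_self A).sqrt.trace).re

/-!
Diagonalize `A = V diag(μ) V*` and `A + E = U diag(ν) U*` and put `W = V* U`. Then
`V* (e^{A+E} - e^A) U` and `V* E U` have entries `W_ij (e^{ν_j} - e^{μ_i})` and
`W_ij (ν_j - μ_i)`, and `|e^b - e^a| ≤ |b - a| (e^a + e^b) / 2`. Cauchy–Schwarz along the rows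
and columns of `U* O V` and `V* E U` then gives `|tr (O (e^{A+E} - e^A))| ≤ ‖O‖ ‖E‖ (Z + Z') / 2`,
where `Z = tr e^A` and `Z' = tr e^{A+E}`. The trace norm of the Hermitian difference `X` of the
normalized exponentials is `tr (O X)` for `O = sign X`, so it is controlled by this bound for that
`O` and, for the change of normalization, for `O = 1`; together they give `2 ‖E‖`.
-/

open Matrix

namespace Real

lemma sinh_le_mul_cosh {x : ℝ} (hx : 0 ≤ x) : sinh x ≤ x * cosh x := by
  have hderiv (y : ℝ) : HasDerivAt (fun y ↦ y * cosh y - sinh y) (y * sinh y) y := by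
    refine (((hasDerivAt_id' y).mul (hasDerivAt_cosh y)).sub (hasDerivAt_sinh y)).congr_deriv ?_
    ring
  have hmono : MonotoneOn (fun y ↦ y * cosh y - sinh y) (Set.Ici 0) := by
    refine monotoneOn_of_deriv_nonneg (convex_Ici 0)
      (fun y _ ↦ (hderiv y).continuousAt.continuousWithinAt)
      (fun y _ ↦ (hderiv y).differentiableAt.differentiableWithinAt) fun y hy ↦ ?_
    rw [interior_Ici, Set.mem_Ioi] at hy
    rw [(hderiv y).deriv]
    exact mul_nonneg hy.le (sinh_nonneg_iff.2 hy.le)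
  simpa using hmono Set.self_mem_Ici hx hx

lemma abs_exp_sub_exp_le (a b : ℝ) : |exp b - exp a| ≤ |b - a| * (exp a + exp b) / 2 := by
  wlog hab : a ≤ b generalizing a b
  · simpa [abs_sub_comm, add_comm] using this b a (le_of_not_ge hab)
  obtain ⟨m, h, hh, rfl, rfl⟩ : ∃ m h, 0 ≤ h ∧ a = m - h ∧ b = m + h :=
    ⟨(a + b) / 2, (b - a) / 2, by linarith, by ring, by ring⟩
  have hsinh : exp (m + h) - exp (m - h) = 2 * exp m * sinh h := by
    rw [sinh_eq, exp_add, exp_sub, exp_neg]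
    field_simp
  have hcosh :
      |m + h - (m - h)| * (exp (m - h) + exp (m + h)) / 2 = 2 * exp m * (h * cosh h) := by
    rw [show m + h - (m - h) = 2 * h by ring, abs_of_nonneg (by linarith), cosh_eq, exp_add,
      exp_sub, exp_neg]
    field_simp
    ring
  rw [hsinh, hcosh, abs_of_nonneg (by have := sinh_nonneg_iff.2 hh; positivity)]
  gcongr
  exact sinh_le_mul_cosh hh

end Real

lemma Complex.norm_inv_mul_sub_inv_mul_le {s t : ℂ} {Y Z : ℝ} (hY : 0 < Y) (hZ : 0 < Z)
    (hs : ‖s‖ ≤ Y) (ht : ‖t‖ ≤ Z) :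
    ‖(Z : ℂ)⁻¹ * t - (Y : ℂ)⁻¹ * s‖ ≤ (‖t - s‖ + |Z - Y|) / max Z Y := by
  wlog hYZ : Y ≤ Z generalizing s t Y Z
  · rw [norm_sub_rev, norm_sub_rev t, abs_sub_comm, max_comm]
    exact this hZ hY ht hs (le_of_not_ge hYZ)
  have hsplit : (Z : ℂ)⁻¹ * t - (Y : ℂ)⁻¹ * s
      = (Z : ℂ)⁻¹ * (t - s) + (Y : ℂ)⁻¹ * s * ((Y - Z : ℝ) / Z : ℂ) := by
    have : (Y : ℂ) ≠ 0 := by exact_mod_cast hY.ne'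
    have : (Z : ℂ) ≠ 0 := by exact_mod_cast hZ.ne'
    push_cast
    field_simp
    ring
  calc ‖(Z : ℂ)⁻¹ * t - (Y : ℂ)⁻¹ * s‖ ≤ ‖t - s‖ / Z + ‖s‖ / Y * (|Y - Z| / Z) := by
        rw [hsplit]
        refine (norm_add_le _ _).trans_eq ?_
        simp only [norm_mul, norm_inv, norm_div, Complex.norm_real, Real.norm_eq_abs,
          abs_of_pos hY, abs_of_pos hZ]
        ring
    _ ≤ ‖t - s‖ / Z + 1 * (|Y - Z| / Z) := by
        gcongr
        exact div_le_one_of_le₀ hs hY.le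
    _ = (‖t - s‖ + |Z - Y|) / max Z Y := by
        rw [max_eq_left hYZ, abs_sub_comm]
        ring

lemma CStarRing.norm_star_mul_mul_of_mem_unitary {E : Type*} [NormedRing E] [StarRing E]
    [CStarRing E] {U V : E} (hU : U ∈ unitary E) (hV : V ∈ unitary E) (a : E) :
    ‖star U * a * V‖ = ‖a‖ := by
  rw [norm_mul_mem_unitary _ hV, norm_mem_unitary_mul _ (Unitary.star_mem hU)]

namespace Matrix

section L2OpNorm

variable {𝕜 m l : Type*} [RCLike 𝕜] [Fintype m] [Fintype l] [DecidableEq l]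

lemma sum_sq_norm_col_le_sq_l2_opNorm (M : Matrix m l 𝕜) (j : l) :
    ∑ i, ‖M i j‖ ^ 2 ≤ ‖M‖ ^ 2 := by
  have h := M.l2_opNorm_mulVec (EuclideanSpace.single j 1)
  rw [PiLp.norm_single, norm_one, mul_one] at h
  simpa [EuclideanSpace.norm_eq, Real.sqrt_le_iff] using h

lemma sum_sq_norm_row_le_sq_l2_opNorm [DecidableEq m] (M : Matrix m l 𝕜) (i : m) :
    ∑ j, ‖M i j‖ ^ 2 ≤ ‖M‖ ^ 2 := by
  simpa [l2_opNorm_conjTranspose] using sum_sq_norm_col_le_sq_l2_opNorm Mᴴ i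

lemma norm_apply_le_l2_opNorm (M : Matrix m l 𝕜) (i : m) (j : l) : ‖M i j‖ ≤ ‖M‖ :=
  pow_le_pow_iff_left₀ (norm_nonneg _) (norm_nonneg _) two_ne_zero |>.mp <|
    (Finset.single_le_sum (fun i _ ↦ sq_nonneg ‖M i j‖) (Finset.mem_univ i)).trans
      (sum_sq_norm_col_le_sq_l2_opNorm M j)

lemma norm_trace_mul_diagonal_le (P : Matrix l l 𝕜) (d : l → 𝕜) :
    ‖trace (P * diagonal d)‖ ≤ ‖P‖ * ∑ i, ‖d i‖ := by
  simp only [trace, diag, mul_diagonal, Finset.mul_sum]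
  refine (norm_sum_le _ _).trans (Finset.sum_le_sum fun i _ ↦ ?_)
  rw [norm_mul]
  gcongr
  exact norm_apply_le_l2_opNorm P i i

lemma sum_norm_mul_norm_le_l2_opNorm_mul [DecidableEq m] (P : Matrix m l 𝕜)
    (Q : Matrix l m 𝕜) (i : l) : ∑ j, ‖P j i‖ * ‖Q i j‖ ≤ ‖P‖ * ‖Q‖ := by
  refine (Real.sum_mul_le_sqrt_mul_sqrt _ _ _).trans
    (mul_le_mul ?_ ?_ (by positivity) (by positivity))
  · exact Real.sqrt_le_iff.mpr ⟨norm_nonneg _, sum_sq_norm_col_le_sq_l2_opNorm P i⟩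
  · exact Real.sqrt_le_iff.mpr ⟨norm_nonneg _, sum_sq_norm_row_le_sq_l2_opNorm Q i⟩

lemma norm_trace_mul_le_of_norm_apply_le [DecidableEq m] (P : Matrix m l 𝕜)
    {N N' : Matrix l m 𝕜} {c : l → ℝ} {d : m → ℝ} (hc : 0 ≤ c) (hd : 0 ≤ d)
    (hN : ∀ i j, ‖N i j‖ ≤ ‖N' i j‖ * (c i + d j)) :
    ‖trace (P * N)‖ ≤ ‖P‖ * ‖N'‖ * (∑ i, c i + ∑ j, d j) := by
  calc ‖trace (P * N)‖ ≤ ∑ j, ∑ i, ‖P j i‖ * ‖N i j‖ := by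
        simp only [trace, diag, mul_apply, ← norm_mul]
        exact (norm_sum_le _ _).trans (Finset.sum_le_sum fun j _ ↦ norm_sum_le _ _)
    _ ≤ ∑ j, ∑ i, ‖P j i‖ * (‖N' i j‖ * (c i + d j)) := by
        gcongr with j _ i _
        exact hN i j
    _ = ∑ i, c i * ∑ j, ‖P j i‖ * ‖N' i j‖ + ∑ j, d j * ∑ i, ‖N' i j‖ * ‖P j i‖ := by
        simp only [mul_add, Finset.sum_add_distrib, Finset.mul_sum]
        rw [Finset.sum_comm]
        congr 1 <;> exact Finset.sum_congr rfl fun _ _ ↦ Finset.sum_congr rfl fun _ _ ↦ by ring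
    _ ≤ ∑ i, c i * (‖P‖ * ‖N'‖) + ∑ j, d j * (‖N'‖ * ‖P‖) := by
        gcongr with i _ j _
        · exact hc i
        · exact sum_norm_mul_norm_le_l2_opNorm_mul P N' i
        · exact hd j
        · exact sum_norm_mul_norm_le_l2_opNorm_mul N' P j
    _ = ‖P‖ * ‖N'‖ * (∑ i, c i + ∑ j, d j) := by
        simp only [← Finset.sum_mul]
        ring

end L2OpNorm

lemma trace_mul_eq_trace_conj_mul_conj {R : Type*} [CommRing R] [StarRing R]
    {U V : Matrix n n R} (hU : U ∈ unitary (Matrix n n R)) (hV : V ∈ unitary (Matrix n n R))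
    (O X : Matrix n n R) : trace (O * X) = trace ((star U * O * V) * (star V * X * U)) := by
  calc trace (O * X) = trace (star U * (O * X) * U) := by
        rw [trace_mul_cycle, Unitary.mul_star_self_of_mem hU, Matrix.one_mul]
    _ = _ := by
        simp only [← Matrix.mul_assoc, Matrix.mul_assoc _ V (star V),
          Unitary.mul_star_self_of_mem hV, Matrix.mul_one]

lemma PosSemidef.sqrt_eq_cfc {A : Matrix n n ℂ} (hA : A.PosSemidef) :
    hA.sqrt = cfc Real.sqrt A := by
  rw [hA.1.cfc_eq]
  rfl

namespace IsHermitian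

section RCLike

variable {𝕜 : Type*} [RCLike 𝕜] {A B : Matrix n n 𝕜}

lemma trace_cfc (hA : A.IsHermitian) (f : ℝ → ℝ) :
    trace (cfc f A) = ((∑ i, f (hA.eigenvalues i) : ℝ) : 𝕜) := by
  rw [hA.cfc_eq, IsHermitian.cfc, Unitary.conjStarAlgAut_apply, trace_mul_cycle,
    Unitary.coe_star_mul_self, Matrix.one_mul, trace_diagonal, RCLike.ofReal_sum]
  rfl

lemma star_mul_cfc_mul (hA : A.IsHermitian) (f : ℝ → ℝ) :
    star (hA.eigenvectorUnitary : Matrix n n 𝕜) * cfc f A * hA.eigenvectorUnitary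
      = diagonal (fun i ↦ (f (hA.eigenvalues i) : 𝕜)) := by
  rw [hA.cfc_eq, IsHermitian.cfc, Unitary.conjStarAlgAut_apply]
  simp [← Matrix.mul_assoc, Matrix.mul_assoc _ (star _), Function.comp_def]

lemma star_mul_cfc_sub_cfc_mul_apply (hA : A.IsHermitian) (hB : B.IsHermitian) (f : ℝ → ℝ)
    (i j : n) :
    (star (hA.eigenvectorUnitary : Matrix n n 𝕜) * (cfc f B - cfc f A) *
        hB.eigenvectorUnitary) i j
      = (star (hA.eigenvectorUnitary : Matrix n n 𝕜) * hB.eigenvectorUnitary) i j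
        * (f (hB.eigenvalues j) - f (hA.eigenvalues i) : ℝ) := by
  set V : Matrix n n 𝕜 := hA.eigenvectorUnitary.1
  set U : Matrix n n 𝕜 := hB.eigenvectorUnitary.1
  have hsplit : star V * (cfc f B - cfc f A) * U
      = star V * U * (star U * cfc f B * U) - (star V * cfc f A * V) * (star V * U) := by
    have hV : V * star V = 1 := Unitary.mul_star_self_of_mem hA.eigenvectorUnitary.2
    have hU : U * star U = 1 := Unitary.mul_star_self_of_mem hB.eigenvectorUnitary.2
    simp only [Matrix.mul_sub, Matrix.sub_mul, ← Matrix.mul_assoc, Matrix.mul_assoc _ U (star U),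
      Matrix.mul_assoc _ V (star V), hU, hV, Matrix.mul_one]
  rw [hsplit, hB.star_mul_cfc_mul, hA.star_mul_cfc_mul, sub_apply, mul_diagonal, diagonal_mul]
  push_cast
  ring

lemma norm_trace_mul_cfc_le (hA : A.IsHermitian) (f : ℝ → ℝ) (O : Matrix n n 𝕜) :
    ‖trace (O * cfc f A)‖ ≤ ‖O‖ * ∑ i, |f (hA.eigenvalues i)| := by
  have hV := hA.eigenvectorUnitary.2
  rw [trace_mul_eq_trace_conj_mul_conj hV hV, hA.star_mul_cfc_mul,
    ← CStarRing.norm_star_mul_mul_of_mem_unitary hV hV O]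
  refine (norm_trace_mul_diagonal_le _ _).trans_eq ?_
  simp only [RCLike.norm_ofReal]

theorem norm_trace_mul_cfc_sub_cfc_le (hA : A.IsHermitian) (hB : B.IsHermitian) {f : ℝ → ℝ}
    (hf₀ : ∀ x, 0 ≤ f x) (hf : ∀ a b, |f b - f a| ≤ |b - a| * (f a + f b) / 2)
    (O : Matrix n n 𝕜) :
    ‖trace (O * (cfc f B - cfc f A))‖ ≤
      ‖O‖ * ‖B - A‖ * ((∑ i, f (hA.eigenvalues i) + ∑ i, f (hB.eigenvalues i)) / 2) := by
  have hV := hA.eigenvectorUnitary.2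
  have hU := hB.eigenvectorUnitary.2
  have hBA : B - A = cfc (id : ℝ → ℝ) B - cfc (id : ℝ → ℝ) A := by
    rw [cfc_id ℝ B hB.isSelfAdjoint, cfc_id ℝ A hA.isSelfAdjoint]
  rw [trace_mul_eq_trace_conj_mul_conj hU hV, ← CStarRing.norm_star_mul_mul_of_mem_unitary hU hV O,
    hBA, ← CStarRing.norm_star_mul_mul_of_mem_unitary hV hU (cfc id B - cfc id A), add_div,
    Finset.sum_div, Finset.sum_div]
  refine norm_trace_mul_le_of_norm_apply_le _ (fun i ↦ div_nonneg (hf₀ _) zero_le_two)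
    (fun j ↦ div_nonneg (hf₀ _) zero_le_two) fun i j ↦ ?_
  rw [star_mul_cfc_sub_cfc_mul_apply hA hB, star_mul_cfc_sub_cfc_mul_apply hA hB, norm_mul,
    norm_mul, RCLike.norm_ofReal, RCLike.norm_ofReal, mul_assoc, ← add_div, id, id,
    ← mul_div_assoc]
  gcongr
  exact hf _ _

lemma norm_trace_mul_exp_sub_exp_le (hA : A.IsHermitian) (hB : B.IsHermitian)
    {O : Matrix n n 𝕜} (hO : ‖O‖ ≤ 1) :
    ‖trace (O * (cfc Real.exp B - cfc Real.exp A))‖ ≤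
      ‖B - A‖ * ((∑ i, Real.exp (hA.eigenvalues i) + ∑ i, Real.exp (hB.eigenvalues i)) / 2) := by
  refine (hA.norm_trace_mul_cfc_sub_cfc_le hB (fun x ↦ (Real.exp_pos x).le)
    Real.abs_exp_sub_exp_le O).trans ?_
  rw [mul_assoc]
  exact mul_le_of_le_one_left (by positivity) hO

lemma abs_sum_exp_sub_sum_exp_le [Nonempty n] (hA : A.IsHermitian) (hB : B.IsHermitian) :
    |∑ i, Real.exp (hB.eigenvalues i) - ∑ i, Real.exp (hA.eigenvalues i)| ≤
      ‖B - A‖ * ((∑ i, Real.exp (hA.eigenvalues i) + ∑ i, Real.exp (hB.eigenvalues i)) / 2) := by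
  have h := hA.norm_trace_mul_exp_sub_exp_le hB (CStarRing.norm_one (E := Matrix n n 𝕜)).le
  rwa [Matrix.one_mul, trace_sub, hA.trace_cfc, hB.trace_cfc, ← RCLike.ofReal_sub,
    RCLike.norm_ofReal] at h

lemma norm_trace_mul_exp_le (hA : A.IsHermitian) {O : Matrix n n 𝕜} (hO : ‖O‖ ≤ 1) :
    ‖trace (O * cfc Real.exp A)‖ ≤ ∑ i, Real.exp (hA.eigenvalues i) := by
  refine (hA.norm_trace_mul_cfc_le Real.exp O).trans ?_
  simp only [abs_of_pos (Real.exp_pos _)]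
  exact mul_le_of_le_one_left (by positivity) hO

end RCLike

variable {A : Matrix n n ℂ}

lemma traceNorm_eq (hA : A.IsHermitian) : traceNorm A = ∑ i, |hA.eigenvalues i| := by
  have hsq : Aᴴ * A = cfc (· ^ 2 : ℝ → ℝ) A := by
    rw [cfc_pow_id A 2 hA.isSelfAdjoint, hA.eq, sq]
  rw [traceNorm, PosSemidef.sqrt_eq_cfc, hsq, ← cfc_comp Real.sqrt _ A hA.isSelfAdjoint,
    hA.trace_cfc]
  simp [Real.sqrt_sq_eq_abs]

lemma exists_norm_le_one_trace_mul_eq_traceNorm (hA : A.IsHermitian) :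
    ∃ O : Matrix n n ℂ, ‖O‖ ≤ 1 ∧ trace (O * A) = traceNorm A := by
  refine ⟨cfc (fun x : ℝ ↦ (SignType.sign x : ℝ)) A,
    norm_cfc_le zero_le_one fun x _ ↦ ?_, ?_⟩
  · rcases lt_trichotomy x 0 with h | h | h <;> simp [h]
  · conv_lhs => enter [1, 2]; rw [← cfc_id' ℝ A hA.isSelfAdjoint]
    rw [← cfc_mul _ _ A (A.finite_real_spectrum.continuousOn _), hA.traceNorm_eq, hA.trace_cfc]
    simp [sign_mul_self]

end IsHermitian

end Matrix

/-- For Hermitian matrices `A` and `E`, the trace distance between the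
normalized matrix exponentials `e^{A+E}/tr(e^{A+E})` and `e^{A}/tr(e^{A})` is at most
`2‖E‖`. -/
theorem traceNorm_normalized_exp_sub_le
    (A E : Matrix n n ℂ) (hA : A.IsHermitian) (hE : E.IsHermitian) :
    traceNorm ((Matrix.trace (NormedSpace.exp (A + E)))⁻¹ • NormedSpace.exp (A + E)
        - (Matrix.trace (NormedSpace.exp A))⁻¹ • NormedSpace.exp A)
      ≤ 2 * ‖E‖ := by
  rcases isEmpty_or_nonempty n with hn | hn
  · simp [traceNorm, Matrix.trace]
  have hAE := hA.add hE
  set Z := ∑ i, Real.exp (hA.eigenvalues i)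
  set Z' := ∑ i, Real.exp (hAE.eigenvalues i)
  have hZ : 0 < Z := Finset.sum_pos (fun i _ ↦ Real.exp_pos _) Finset.univ_nonempty
  have hZ' : 0 < Z' := Finset.sum_pos (fun i _ ↦ Real.exp_pos _) Finset.univ_nonempty
  rw [← CFC.real_exp_eq_normedSpace_exp hA.isSelfAdjoint,
    ← CFC.real_exp_eq_normedSpace_exp hAE.isSelfAdjoint, hA.trace_cfc, hAE.trace_cfc,
    RCLike.ofReal_eq_complex_ofReal]
  have hX : IsSelfAdjoint ((Z' : ℂ)⁻¹ • cfc Real.exp (A + E) - (Z : ℂ)⁻¹ • cfc Real.exp A) :=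
    ((IsSelfAdjoint.inv₀ (Complex.conj_ofReal Z')).smul (cfc_predicate _ _)).sub
      ((IsSelfAdjoint.inv₀ (Complex.conj_ofReal Z)).smul (cfc_predicate _ _))
  obtain ⟨O, hO, hOX⟩ := hX.isHermitian.exists_norm_le_one_trace_mul_eq_traceNorm
  calc traceNorm _ ≤ ‖trace (O * _)‖ := by
        rw [hOX, Complex.norm_real, Real.norm_eq_abs]
        exact le_abs_self _
    _ = ‖(Z' : ℂ)⁻¹ * trace (O * cfc Real.exp (A + E))
          - (Z : ℂ)⁻¹ * trace (O * cfc Real.exp A)‖ := by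
        rw [Matrix.mul_sub, trace_sub, mul_smul_comm, mul_smul_comm, trace_smul, trace_smul,
          smul_eq_mul, smul_eq_mul]
    _ ≤ (‖trace (O * (cfc Real.exp (A + E) - cfc Real.exp A))‖ + |Z' - Z|) / max Z' Z := by
        rw [Matrix.mul_sub, trace_sub]
        exact Complex.norm_inv_mul_sub_inv_mul_le hZ hZ' (hA.norm_trace_mul_exp_le hO)
          (hAE.norm_trace_mul_exp_le hO)
    _ ≤ 2 * ‖E‖ := by
        have hdiff := hA.norm_trace_mul_exp_sub_exp_le hAE hO
        have hZZ := hA.abs_sum_exp_sub_sum_exp_le hAE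
        rw [add_sub_cancel_left] at hdiff hZZ
        refine div_le_of_le_mul₀ (by positivity) (by positivity) ?_
        nlinarith [le_max_left Z' Z, le_max_right Z' Z, norm_nonneg E]
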